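/- Let κ ∈ Γ_k with κ₁ ≥ ⋯ ≥ κₙ ordered decreasingly and k ≥ 2. Then for indices p with κ_p ≥ κ₁/2 > 0, σ_{k-2}(κ|1p) ≤ C·κ₂⋯κ_k/κ_p for a constant C = C(n,k), and consequently σ_{k-2}(κ|1p) ≤ 2C·κ₁⋯κ_{k-1}/κ₁ ≤ 2C·σ_{k-1}(κ) when κ₁ ≥ 1. -/

import Mathlib

noncomputable def esymm (n k : ℕ) (κ : Fin n → ℝ) : ℝ :=
  ∑ s ∈ Finset.powersetCard k (Finset.univ : Finset (Fin n)), ∏ i ∈ s, κ i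

noncomputable def esymm1 (n m : ℕ) (κ : Fin n → ℝ) (i : Fin n) : ℝ :=
  ∑ s ∈ Finset.powersetCard m ((Finset.univ : Finset (Fin n)).erase i), ∏ j ∈ s, κ j

noncomputable def esymm2 (n m : ℕ) (κ : Fin n → ℝ) (i j : Fin n) : ℝ :=
  ∑ s ∈ Finset.powersetCard m (((Finset.univ : Finset (Fin n)).erase i).erase j), ∏ l ∈ s, κ l

def GardingCone (n k : ℕ) : Set (Fin n → ℝ) :=
  {κ | ∀ m, 1 ≤ m → m ≤ k → 0 < esymm n m κ}

/-!
The key fact is the removal property of Gårding cones: erasing one entry of a point of `Γ_{k+1}`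
gives a point of `Γ_k`. Shifting every entry by `t ≥ 0` stays in `Γ_{k+1}` (Taylor expansion of
`∏ (X + κᵢ)`). Along such shifts `σ_k` of the erased multiset never vanishes: otherwise a suitable
derivative of its polynomial `∏ (X + κᵢ)`, real-rooted with nonnegative coefficients and positive
constant term, would have a vanishing linear coefficient. As `σ_k` is positive for large shifts,
the intermediate value theorem makes it positive at `t = 0`.

For ordered `κ ∈ Γ_k` this gives: `κ₁, …, κ_k > 0`; the tail `κ_k, …, κ_n` has positive sum, so
`|κᵢ| ≤ n κ_k` for `i ≥ k`; and a product of `k - 1` nonnegative entries is at most `σ_{k-1}(κ)`.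
Each term of `σ_{k-2}(κ|1p)` is then at most `n^{k-2}` times the product of `κ₂, …, κ_k` with one
factor `κ_q ≥ κ_p` left out.
-/

open Polynomial

namespace Multiset

theorem esymm_zero (s : Multiset ℝ) : s.esymm 0 = 1 := by
  simp [esymm, powersetCard_zero_left]

theorem esymm_one (s : Multiset ℝ) : s.esymm 1 = s.sum := by
  simp [esymm, powersetCard_one, map_map]

theorem esymm_cons_succ (a : ℝ) (s : Multiset ℝ) (m : ℕ) :
    (a ::ₘ s).esymm (m + 1) = s.esymm (m + 1) + a * s.esymm m := by
  simp only [esymm, powersetCard_cons, map_add, sum_add, map_map, Function.comp_def, prod_cons,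
    ← sum_map_mul_left]

theorem esymm_eq_zero_of_card_lt {s : Multiset ℝ} {m : ℕ} (h : card s < m) : s.esymm m = 0 := by
  simp [esymm, powersetCard_eq_empty m h]

theorem le_card_of_esymm_ne_zero {s : Multiset ℝ} {m : ℕ} (h : s.esymm m ≠ 0) : m ≤ card s :=
  not_lt.1 fun hlt => h (esymm_eq_zero_of_card_lt hlt)

theorem esymm_pos_of_forall_pos {s : Multiset ℝ} (hs : ∀ x ∈ s, 0 < x) {m : ℕ}
    (hm : m ≤ card s) : 0 < s.esymm m := by
  have hne : s.powersetCard m ≠ 0 := by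
    rw [Ne, ← card_eq_zero, card_powersetCard]
    exact (Nat.choose_pos hm).ne'
  rw [esymm]
  simpa using sum_lt_sum_of_nonempty (f := fun _ => (0 : ℝ)) (g := prod) hne
    fun t ht => prod_pos fun x hx => hs x (mem_of_le (mem_powersetCard.1 ht).1 hx)

theorem prod_X_add_C_eq_prod_X_sub_C_neg (s : Multiset ℝ) :
    (s.map fun r => X + C r).prod = ((s.map Neg.neg).map fun r => X - C r).prod := by
  simp [map_map, sub_eq_add_neg]

theorem natDegree_prod_X_add_C (s : Multiset ℝ) :
    ((s.map fun r => X + C r).prod).natDegree = card s := by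
  rw [prod_X_add_C_eq_prod_X_sub_C_neg, natDegree_multiset_prod_X_sub_C_eq_card, card_map]

theorem card_roots_prod_X_add_C (s : Multiset ℝ) :
    card ((s.map fun r => X + C r).prod).roots = card s := by
  rw [prod_X_add_C_eq_prod_X_sub_C_neg, roots_multiset_prod_X_sub_C, card_map]

theorem coeff_prod_X_add_C_nonneg {s : Multiset ℝ} {k : ℕ} (hnn : ∀ j ≤ k, 0 ≤ s.esymm j)
    {i : ℕ} (hi : card s ≤ i + k) : 0 ≤ ((s.map fun r => X + C r).prod).coeff i := by
  rcases le_or_gt i (card s) with hle | hlt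
  · rw [prod_X_add_C_coeff s hle]
    exact hnn _ (by omega)
  · rw [coeff_eq_zero_of_natDegree_lt (by rwa [natDegree_prod_X_add_C])]

theorem esymm_map_add {s : Multiset ℝ} {m : ℕ} (t : ℝ) (hm : m ≤ card s) :
    (s.map (· + t)).esymm m =
      (hasseDeriv (card s - m) (s.map fun r => X + C r).prod).eval t := by
  have htaylor : ((s.map (· + t)).map fun r => X + C r).prod =
      taylor t (s.map fun r => X + C r).prod := by
    rw [taylor_apply, multiset_prod_comp, map_map, map_map]
    congr 1
    refine map_congr rfl fun x _ => ?_
    simp only [Function.comp_apply, add_comp, X_comp, C_comp, C_add]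
    ring
  have h := prod_X_add_C_coeff (s.map (· + t)) (k := card s - m) (by simp)
  rw [card_map, Nat.sub_sub_self hm, htaylor, taylor_coeff] at h
  exact h.symm

theorem continuous_esymm_map_add {s : Multiset ℝ} {m : ℕ} (hm : m ≤ card s) :
    Continuous fun t : ℝ => (s.map (· + t)).esymm m := by
  simp_rw [esymm_map_add _ hm]
  exact Polynomial.continuous _

theorem exists_forall_map_add_pos (s : Multiset ℝ) :
    ∃ T, 0 ≤ T ∧ ∀ x ∈ s.map (· + T), 0 < x := by
  obtain ⟨T, hT⟩ := Finset.exists_le (s.map Neg.neg).toFinset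
  refine ⟨max T 0 + 1, by positivity, ?_⟩
  simp only [mem_map, forall_exists_index, and_imp]
  rintro _ x hx rfl
  have := hT (-x) (by simpa using mem_map_of_mem Neg.neg hx)
  linarith [le_max_left T 0]

end Multiset

namespace Polynomial

theorem eval_pos_of_coeff_nonneg {p : ℝ[X]} (hnn : ∀ i, 0 ≤ p.coeff i) (h0 : 0 < p.coeff 0)
    {t : ℝ} (ht : 0 ≤ t) : 0 < p.eval t := by
  rw [eval_eq_sum_range]
  exact Finset.sum_pos' (fun i _ => mul_nonneg (hnn i) (pow_nonneg ht i))
    ⟨0, Finset.mem_range.2 (Nat.succ_pos _), by simpa using h0⟩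

theorem coeff_pos_of_card_roots_eq_natDegree {p : ℝ[X]}
    (hroots : Multiset.card p.roots = p.natDegree) (hnn : ∀ i, 0 ≤ p.coeff i)
    (h0 : 0 < p.coeff 0) {k : ℕ} (hk : k ≤ p.natDegree) : 0 < p.coeff k := by
  have hp : p ≠ 0 := by rintro rfl; simp at h0
  have hneg : ∀ x ∈ p.roots.map Neg.neg, 0 < x := by
    simp only [Multiset.mem_map, forall_exists_index, and_imp]
    rintro _ x hx rfl
    by_contra! hx0
    exact (eval_pos_of_coeff_nonneg hnn h0 (neg_nonpos.1 hx0)).ne' ((mem_roots hp).1 hx)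
  have hlead : 0 < p.leadingCoeff :=
    lt_of_le_of_ne (hnn _) (leadingCoeff_ne_zero.2 hp).symm
  rw [coeff_eq_esymm_roots_of_card hroots hk, mul_assoc, ← Multiset.esymm_neg]
  exact mul_pos hlead (Multiset.esymm_pos_of_forall_pos hneg (by simp [hroots]))

theorem card_roots_derivative_eq_natDegree {p : ℝ[X]}
    (h : Multiset.card p.roots = p.natDegree) :
    Multiset.card (derivative p).roots = (derivative p).natDegree :=
  le_antisymm (card_roots' _) (by
    have := card_roots_le_derivative p
    rw [natDegree_derivative]
    omega)

theorem card_roots_iterate_derivative_eq_natDegree {p : ℝ[X]}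
    (h : Multiset.card p.roots = p.natDegree) (a : ℕ) :
    Multiset.card (derivative^[a] p).roots = (derivative^[a] p).natDegree := by
  induction a with
  | zero => exact h
  | succ a ih =>
    rw [Function.iterate_succ_apply']
    exact card_roots_derivative_eq_natDegree ih

theorem natDegree_iterate_derivative_eq (p : ℝ[X]) (a : ℕ) :
    (derivative^[a] p).natDegree = p.natDegree - a := by
  induction a with
  | zero => rfl
  | succ a ih => rw [Function.iterate_succ_apply', natDegree_derivative, ih, Nat.sub_sub]

end Polynomial

namespace Multiset

theorem esymm_pos_of_esymm_succ_pos {s : Multiset ℝ} {m : ℕ}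
    (hnn : ∀ j ≤ m + 1, 0 ≤ s.esymm j) (h : 0 < s.esymm (m + 1)) : 0 < s.esymm m := by
  set P := (s.map fun r => X + C r).prod
  have hd : m + 1 ≤ card s := le_card_of_esymm_ne_zero h.ne'
  set a := card s - (m + 1)
  -- `q` is real-rooted of degree `m + 1`, with `i`-th coefficient a positive multiple of
  -- `σ_{m+1-i}(s)`.
  set q := derivative^[a] P
  have hcoeff (i : ℕ) : q.coeff i = (i + a).descFactorial a * P.coeff (i + a) := by
    rw [coeff_iterate_derivative, nsmul_eq_mul]
  have hfac (i : ℕ) : (0 : ℝ) < (i + a).descFactorial a := by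
    exact_mod_cast Nat.pos_of_ne_zero fun h0 => by
      rw [Nat.descFactorial_eq_zero_iff_lt] at h0; omega
  have hq1 : 0 < q.coeff 1 := by
    refine coeff_pos_of_card_roots_eq_natDegree ?_ (fun i => ?_) ?_ ?_
    · refine card_roots_iterate_derivative_eq_natDegree ?_ a
      rw [card_roots_prod_X_add_C, natDegree_prod_X_add_C]
    · rw [hcoeff]
      exact mul_nonneg (hfac i).le (coeff_prod_X_add_C_nonneg hnn (by omega))
    · rw [hcoeff, prod_X_add_C_coeff s (by omega), show card s - (0 + a) = m + 1 by omega]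
      exact mul_pos (hfac 0) h
    · rw [natDegree_iterate_derivative_eq, natDegree_prod_X_add_C]
      omega
  rw [hcoeff, prod_X_add_C_coeff s (by omega), show card s - (1 + a) = m by omega] at hq1
  exact pos_of_mul_pos_right hq1 (hfac 1).le

def InGardingCone (k : ℕ) (s : Multiset ℝ) : Prop :=
  ∀ m, 1 ≤ m → m ≤ k → 0 < s.esymm m

variable {k m : ℕ} {s t : Multiset ℝ}

theorem InGardingCone.mono {j : ℕ} (h : s.InGardingCone k) (hjk : j ≤ k) : s.InGardingCone j :=
  fun m h1 hm => h m h1 (hm.trans hjk)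

theorem InGardingCone.esymm_nonneg (h : s.InGardingCone k) (hm : m ≤ k) : 0 ≤ s.esymm m := by
  rcases Nat.eq_zero_or_pos m with rfl | hm0
  · rw [esymm_zero]
    exact zero_le_one
  · exact (h m hm0 hm).le

theorem InGardingCone.map_add (h : s.InGardingCone k) {t : ℝ} (ht : 0 ≤ t) :
    (s.map (· + t)).InGardingCone k := by
  intro m h1 hmk
  have hm : m ≤ card s := le_card_of_esymm_ne_zero (h m h1 hmk).ne'
  rw [esymm_map_add t hm]
  refine eval_pos_of_coeff_nonneg (fun j => ?_) ?_ ht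
  · rw [hasseDeriv_coeff]
    exact mul_nonneg (by positivity)
      (coeff_prod_X_add_C_nonneg (fun j hj => h.esymm_nonneg (hj.trans hmk)) (by omega))
  · rw [hasseDeriv_coeff, zero_add, Nat.choose_self, Nat.cast_one, one_mul,
      prod_X_add_C_coeff s (Nat.sub_le _ _), Nat.sub_sub_self hm]
    exact h m h1 hmk

theorem esymm_erase_ne_zero {a : ℝ} (ha : a ∈ s) (h : 0 < s.esymm (k + 2))
    (herase : (s.erase a).InGardingCone k) : (s.erase a).esymm (k + 1) ≠ 0 := by
  intro h0
  have hsplit : s.esymm (k + 2) = (s.erase a).esymm (k + 2) + a * (s.erase a).esymm (k + 1) := by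
    conv_lhs => rw [← cons_erase ha]
    exact esymm_cons_succ a _ (k + 1)
  rw [h0, mul_zero, add_zero] at hsplit
  rw [hsplit] at h
  refine (esymm_pos_of_esymm_succ_pos (fun j hj => ?_) h).ne' h0
  rcases Nat.lt_or_ge j (k + 1) with hjk | hjk
  · exact herase.esymm_nonneg (by omega)
  · rcases (show j = k + 1 ∨ j = k + 2 by omega) with rfl | rfl
    · exact h0.ge
    · exact h.le

theorem InGardingCone.erase (h : s.InGardingCone (k + 1)) {a : ℝ} (ha : a ∈ s) :
    (s.erase a).InGardingCone k := by
  induction k generalizing s a with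
  | zero => intro m h1 h2; omega
  | succ k ih =>
    intro m h1 hm
    rcases Nat.lt_or_ge m (k + 1) with hlt | hge
    · exact ih (h.mono (by omega)) ha m h1 (by omega)
    obtain rfl : m = k + 1 := by omega
    set N := s.erase a
    have hcard : k + 1 ≤ card N := by
      have := le_card_of_esymm_ne_zero (h (k + 2) (by omega) le_rfl).ne'
      rw [card_erase_of_mem ha, Nat.pred_eq_sub_one]
      omega
    have hne (t : ℝ) (ht : 0 ≤ t) : (N.map (· + t)).esymm (k + 1) ≠ 0 := by
      have hs := h.map_add ht
      have ha' : a + t ∈ s.map (· + t) := mem_map_of_mem _ ha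
      rw [map_erase _ (add_left_injective t)]
      exact esymm_erase_ne_zero ha' (hs _ (by omega) le_rfl) (ih (hs.mono (by omega)) ha')
    obtain ⟨T, hT0, hTpos⟩ := exists_forall_map_add_pos N
    have hT : 0 < (N.map (· + T)).esymm (k + 1) :=
      esymm_pos_of_forall_pos hTpos (by rwa [card_map])
    by_contra! h0
    obtain ⟨t, ht, ht0⟩ := intermediate_value_Icc hT0
      (continuous_esymm_map_add hcard).continuousOn ⟨by simpa using h0, hT.le⟩
    exact hne t ht.1 ht0

theorem InGardingCone.of_add (h : (s + t).InGardingCone k) : t.InGardingCone (k - card s) := by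
  induction s using Multiset.induction generalizing k with
  | empty => simpa using h
  | cons a s ih =>
    obtain _ | k := k
    · exact fun m h1 h2 => by rw [Nat.zero_sub] at h2; omega
    rw [cons_add] at h
    simpa using ih (by simpa using h.erase (mem_cons_self a _))

theorem InGardingCone.prod_le_esymm (hs : ∀ x ∈ s, 0 ≤ x)
    (h : (s + t).InGardingCone (card s + 1)) : s.prod ≤ (s + t).esymm (card s) := by
  induction s using Multiset.induction with
  | empty => simp [esymm_zero]
  | cons a s ih =>
    rw [cons_add, card_cons] at h
    have hst : (s + t).InGardingCone (card s + 1) := by simpa using h.erase (mem_cons_self a _)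
    have ha : 0 ≤ a := hs a (mem_cons_self a s)
    rw [prod_cons, cons_add, card_cons, esymm_cons_succ]
    calc a * s.prod ≤ a * (s + t).esymm (card s) :=
          mul_le_mul_of_nonneg_left (ih (fun x hx => hs x (mem_cons_of_mem hx)) hst) ha
      _ ≤ _ := le_add_of_nonneg_left (hst (card s + 1) (by omega) le_rfl).le

end Multiset

namespace Finset

variable {ι : Type*} {f : ι → ℝ}

theorem map_univ_val_eq_add [Fintype ι] [DecidableEq ι] (A : Finset ι) :
    univ.val.map f = A.val.map f + Aᶜ.val.map f := by
  rw [← Multiset.map_add, ← union_compl A, ← disjUnion_eq_union _ _ disjoint_compl_right]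
  rfl

theorem abs_le_card_mul_of_sum_pos {s : Finset ι} {M : ℝ} (hsum : 0 < ∑ j ∈ s, f j)
    (hle : ∀ j ∈ s, f j ≤ M) {i : ι} (hi : i ∈ s) : |f i| ≤ #s * M := by
  classical
  have htot : ∑ j ∈ s, f j ≤ #s * M := by simpa using sum_le_card_nsmul s f M hle
  have hrest : ∑ j ∈ s.erase i, f j ≤ #(s.erase i) * M := by
    simpa using sum_le_card_nsmul _ f M fun j hj => hle j (mem_of_mem_erase hj)
  have hcard : (#(s.erase i) : ℝ) + 1 = #s := by exact_mod_cast card_erase_add_one hi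
  have hsplit := add_sum_erase s f hi
  have hM : 0 ≤ M := by
    by_contra! hM
    nlinarith [show (0 : ℝ) ≤ #s from Nat.cast_nonneg _]
  rw [abs_le]
  constructor <;> nlinarith [hle i hi, show (0 : ℝ) ≤ #(s.erase i) from Nat.cast_nonneg _]

variable [DecidableEq ι]

theorem prod_le_pow_card_mul_prod {s T : Finset ι} {c M : ℝ} (hcard : #s = #T) (hc : 1 ≤ c)
    (hM : 0 ≤ M) (hT : ∀ j ∈ T, M ≤ f j) (hs : ∀ i ∈ s \ T, |f i| ≤ c * M) :
    ∏ i ∈ s, f i ≤ c ^ #s * ∏ j ∈ T, f j := by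
  have hTnn : ∀ j ∈ T, 0 ≤ f j := fun j hj => hM.trans (hT j hj)
  have hinter : ∏ i ∈ s ∩ T, |f i| = ∏ i ∈ s ∩ T, f i :=
    prod_congr rfl fun i hi => abs_of_nonneg (hTnn i (mem_inter.1 hi).2)
  have hout : ∏ i ∈ s \ T, |f i| ≤ c ^ #(s \ T) * M ^ #(T \ s) := by
    rw [← card_sdiff_comm hcard, ← mul_pow, ← prod_const]
    exact prod_le_prod (fun i _ => abs_nonneg _) hs
  have hin : M ^ #(T \ s) ≤ ∏ j ∈ T \ s, f j := by
    rw [← prod_const]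
    exact prod_le_prod (fun _ _ => hM) fun j hj => hT j (mem_sdiff.1 hj).1
  calc ∏ i ∈ s, f i ≤ ∏ i ∈ s, |f i| := (le_abs_self _).trans (abs_prod s f).le
    _ = (∏ i ∈ s ∩ T, f i) * ∏ i ∈ s \ T, |f i| := by rw [← hinter, prod_inter_mul_prod_sdiff]
    _ ≤ (∏ i ∈ s ∩ T, f i) * (c ^ #(s \ T) * ∏ j ∈ T \ s, f j) := by
      gcongr
      · exact prod_nonneg fun i hi => hTnn i (mem_inter.1 hi).2
      exact hout.trans (by gcongr)
    _ = c ^ #(s \ T) * ∏ j ∈ T, f j := by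
      rw [← prod_inter_mul_prod_sdiff T s, inter_comm]; ring
    _ ≤ c ^ #s * ∏ j ∈ T, f j :=
      mul_le_mul_of_nonneg_right (pow_le_pow_right₀ hc (card_le_card sdiff_subset))
        (prod_nonneg hTnn)

theorem sum_powersetCard_prod_le {W T : Finset ι} {m : ℕ} {c M : ℝ} (hcard : #T = m)
    (hc : 1 ≤ c) (hM : 0 ≤ M) (hT : ∀ j ∈ T, M ≤ f j) (hW : ∀ i ∈ W \ T, |f i| ≤ c * M) :
    ∑ u ∈ W.powersetCard m, ∏ i ∈ u, f i ≤ (#W).choose m * c ^ m * ∏ j ∈ T, f j := by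
  have hterm : ∀ u ∈ W.powersetCard m, ∏ i ∈ u, f i ≤ c ^ m * ∏ j ∈ T, f j := by
    intro u hu
    obtain ⟨huW, hu⟩ := mem_powersetCard.1 hu
    rw [← hu]
    exact prod_le_pow_card_mul_prod (hu.trans hcard.symm) hc hM hT
      fun i hi => hW i (sdiff_subset_sdiff huW le_rfl hi)
  simpa [mul_assoc] using sum_le_card_nsmul _ _ _ hterm

end Finset

open Finset

theorem card_filter_one_le_lt {n k : ℕ} (hkn : k ≤ n) :
    #(univ.filter fun i : Fin n => 1 ≤ (i : ℕ) ∧ (i : ℕ) < k) = k - 1 := by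
  rw [← card_map Fin.valEmbedding, ← Nat.card_Ico]
  congr 1
  ext x
  simp only [mem_map, mem_filter, mem_univ, true_and, Fin.valEmbedding_apply, mem_Ico]
  constructor
  · rintro ⟨i, hi, rfl⟩
    exact hi
  · intro hx
    exact ⟨⟨x, by omega⟩, hx, rfl⟩

theorem esymm_eq_esymm_map_univ {n : ℕ} (m : ℕ) (κ : Fin n → ℝ) :
    esymm n m κ = (univ.val.map κ).esymm m :=
  (esymm_map_val κ univ m).symm

namespace GardingCone

variable {n k : ℕ} {κ : Fin n → ℝ}

theorem inGardingCone_map_univ (hκ : κ ∈ GardingCone n k) :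
    (univ.val.map κ).InGardingCone k :=
  fun m h1 hm => by rw [← esymm_eq_esymm_map_univ]; exact hκ m h1 hm

theorem sum_compl_pos (hκ : κ ∈ GardingCone n k) {A : Finset (Fin n)} (hA : #A < k) :
    0 < ∑ i ∈ Aᶜ, κ i := by
  have h := inGardingCone_map_univ hκ
  rw [map_univ_val_eq_add A] at h
  simpa [Multiset.esymm_one] using h.of_add 1 le_rfl (by simp only [Multiset.card_map, card_val]; omega)

theorem prod_le_esymm (hκ : κ ∈ GardingCone n k) {A : Finset (Fin n)} (hA : #A < k)
    (hA0 : ∀ i ∈ A, 0 ≤ κ i) : ∏ i ∈ A, κ i ≤ esymm n #A κ := by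
  have h := (inGardingCone_map_univ hκ).mono (show #A + 1 ≤ k from hA)
  rw [map_univ_val_eq_add A] at h
  have := Multiset.InGardingCone.prod_le_esymm (s := A.val.map κ) (t := Aᶜ.val.map κ)
    (by simpa using hA0) (by simpa using h)
  rw [esymm_eq_esymm_map_univ, map_univ_val_eq_add A]
  simpa using this

theorem pos_of_lt (hκ : κ ∈ GardingCone n k) (hanti : Antitone κ) {i : Fin n}
    (hi : (i : ℕ) < k) : 0 < κ i := by
  have hsum := sum_compl_pos hκ (A := Iio i) (by rwa [Fin.card_Iio])
  obtain ⟨j, hj, hj0⟩ := exists_lt_of_sum_lt (f := fun _ => (0 : ℝ)) (by simpa using hsum)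
  exact hj0.trans_le (hanti (by simpa using hj))

theorem abs_le_mul (hκ : κ ∈ GardingCone n k) (hanti : Antitone κ) {K : Fin n}
    (hK : (K : ℕ) < k) {i : Fin n} (hi : K ≤ i) : |κ i| ≤ n * κ K := by
  have hsum := sum_compl_pos hκ (A := Iio K) (by rwa [Fin.card_Iio])
  have hle : ∀ j ∈ (Iio K)ᶜ, κ j ≤ κ K := fun j hj => hanti (by simpa using hj)
  calc |κ i| ≤ #(Iio K)ᶜ * κ K := abs_le_card_mul_of_sum_pos hsum hle (by simpa using hi)
    _ ≤ n * κ K := by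
      gcongr
      · exact (pos_of_lt hκ hanti hK).le
      · exact_mod_cast (card_le_univ _).trans_eq (Fintype.card_fin n)

theorem esymm2_le_mul_prod_erase (hk : 2 ≤ k) (hkn : k ≤ n) (hκ : κ ∈ GardingCone n k)
    (hanti : Antitone κ) {z p q : Fin n} (hz : (z : ℕ) = 0) (hpz : p ≠ z)
    (hqS : q ∈ univ.filter fun i : Fin n => 1 ≤ (i : ℕ) ∧ (i : ℕ) < k)
    (hq : q = p ∨ (q : ℕ) = k - 1) :
    esymm2 n (k - 2) κ z p ≤ (n - 2).choose (k - 2) * n ^ (k - 2) *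
      ∏ j ∈ (univ.filter fun i : Fin n => 1 ≤ (i : ℕ) ∧ (i : ℕ) < k).erase q, κ j := by
  set K : Fin n := ⟨k - 1, by omega⟩
  have hT : ∀ j ∈ (univ.filter fun i : Fin n => 1 ≤ (i : ℕ) ∧ (i : ℕ) < k).erase q,
      κ K ≤ κ j := fun j hj => by
    have := (mem_filter.1 (mem_of_mem_erase hj)).2
    exact hanti (Fin.le_def.2 (show (j : ℕ) ≤ k - 1 by omega))
  have hW : ∀ i ∈ ((univ.erase z).erase p) \
      (univ.filter fun i : Fin n => 1 ≤ (i : ℕ) ∧ (i : ℕ) < k).erase q, |κ i| ≤ n * κ K := by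
    intro i hi
    refine abs_le_mul hκ hanti (show k - 1 < k by omega) (Fin.le_def.2 ?_)
    simp only [mem_sdiff, mem_erase, mem_univ, mem_filter, and_true, true_and, not_and] at hi
    obtain ⟨⟨hip, hi0⟩, hiT⟩ := hi
    have hi0' : (i : ℕ) ≠ 0 := fun h => hi0 (Fin.ext (h.trans hz.symm))
    by_cases hiq : i = q
    · subst hiq
      rcases hq with rfl | hq
      · exact absurd rfl hip
      · exact hq.ge
    · have := hiT hiq
      show k - 1 ≤ (i : ℕ)
      omega
  have hK : 0 ≤ κ K := (pos_of_lt hκ hanti (show k - 1 < k by omega)).le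
  have hsum := sum_powersetCard_prod_le (m := k - 2)
    (by rw [card_erase_of_mem hqS, card_filter_one_le_lt hkn]; omega)
    (Nat.one_le_cast.2 (by omega)) hK hT hW
  rwa [card_erase_of_mem (mem_erase.2 ⟨hpz, mem_univ p⟩), card_erase_of_mem (mem_univ _),
    card_univ, Fintype.card_fin, show n - 1 - 1 = n - 2 by omega] at hsum

theorem esymm2_le_div (hk : 2 ≤ k) (hkn : k ≤ n) (hκ : κ ∈ GardingCone n k)
    (hanti : Antitone κ) {z p : Fin n} (hz : (z : ℕ) = 0) (hpz : p ≠ z) (hp : 0 < κ p) :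
    esymm2 n (k - 2) κ z p ≤ (n - 2).choose (k - 2) * n ^ (k - 2) *
      (∏ i ∈ univ.filter (fun i : Fin n => 1 ≤ (i : ℕ) ∧ (i : ℕ) < k), κ i) / κ p := by
  set S := univ.filter fun i : Fin n => 1 ≤ (i : ℕ) ∧ (i : ℕ) < k
  have hp0 : (p : ℕ) ≠ 0 := fun h => hpz (Fin.ext (h.trans hz.symm))
  obtain ⟨q, hqS, hpq, hq⟩ : ∃ q ∈ S, κ p ≤ κ q ∧ (q = p ∨ (q : ℕ) = k - 1) := by
    by_cases h : (p : ℕ) < k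
    · exact ⟨p, mem_filter.2 ⟨mem_univ _, by omega, h⟩, le_rfl, Or.inl rfl⟩
    · exact ⟨⟨k - 1, by omega⟩, mem_filter.2 ⟨mem_univ _, show 1 ≤ k - 1 by omega, show k - 1 < k by omega⟩,
        hanti (Fin.le_def.2 (show k - 1 ≤ (p : ℕ) by omega)), Or.inr rfl⟩
  have hT0 : 0 ≤ ∏ j ∈ S.erase q, κ j := prod_nonneg fun j hj =>
    (pos_of_lt hκ hanti (mem_filter.1 (mem_of_mem_erase hj)).2.2).le
  have hTS : ∏ j ∈ S.erase q, κ j ≤ (∏ i ∈ S, κ i) / κ p := by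
    rw [le_div_iff₀ hp, ← mul_prod_erase S κ hqS, mul_comm]
    exact mul_le_mul_of_nonneg_right hpq hT0
  rw [mul_div_assoc]
  exact (esymm2_le_mul_prod_erase hk hkn hκ hanti hz hpz hqS hq).trans (by gcongr)

end GardingCone

theorem esymm2_near_top_bound (n k : ℕ) (hk : 2 ≤ k) (hkn : k ≤ n) :
    ∃ C : ℝ, 0 < C ∧
      ∀ κ : Fin n → ℝ, κ ∈ GardingCone n k → Antitone κ →
        ∀ p : Fin n, p ≠ ⟨0, by omega⟩ → κ ⟨0, by omega⟩ / 2 ≤ κ p →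
          esymm2 n (k - 2) κ ⟨0, by omega⟩ p
              ≤ C * (∏ i ∈ Finset.univ.filter (fun i : Fin n => 1 ≤ (i : ℕ) ∧ (i : ℕ) < k), κ i) / κ p ∧
          (1 ≤ κ ⟨0, by omega⟩ →
            esymm2 n (k - 2) κ ⟨0, by omega⟩ p ≤ 2 * C * esymm n (k - 1) κ) := by
  set C : ℝ := (n - 2).choose (k - 2) * n ^ (k - 2)
  have hC : 0 < C := by
    have := Nat.choose_pos (show k - 2 ≤ n - 2 by omega)
    have : 0 < n := by omega
    positivity
  refine ⟨C, hC, fun κ hκ hanti p hp0 hp => ?_⟩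
  set S := univ.filter fun i : Fin n => 1 ≤ (i : ℕ) ∧ (i : ℕ) < k
  have hSpos : ∀ i ∈ S, 0 ≤ κ i :=
    fun i hi => (GardingCone.pos_of_lt hκ hanti (mem_filter.1 hi).2.2).le
  have hκp : 0 < κ p := by
    linarith [GardingCone.pos_of_lt hκ hanti (i := ⟨0, by omega⟩) (show 0 < k by omega)]
  have hfirst := GardingCone.esymm2_le_div hk hkn hκ hanti rfl hp0 hκp
  refine ⟨hfirst, fun h1 => hfirst.trans ?_⟩
  have hcard : #S = k - 1 := card_filter_one_le_lt hkn
  have hS : ∏ i ∈ S, κ i ≤ esymm n (k - 1) κ :=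
    hcard ▸ GardingCone.prod_le_esymm hκ (by omega) hSpos
  rw [div_le_iff₀ hκp]
  calc C * ∏ i ∈ S, κ i ≤ C * (∏ i ∈ S, κ i) * (2 * κ p) :=
        le_mul_of_one_le_right (mul_nonneg hC.le (prod_nonneg hSpos)) (by linarith)
    _ ≤ C * esymm n (k - 1) κ * (2 * κ p) := by gcongr
    _ = 2 * C * esymm n (k - 1) κ * κ p := by ring
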